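/- Resources introduced by Pack-R: let σ = ⟨M,G,L, tv₁::⋯::tvₙ::S⟩ be a well-formed state, s ∈ 𝓣 a resource type, v = {(fᵢ,tvᵢ) | 1 ≤ i ≤ n} a record value of type s, and t ∈ R a fresh resource tag, i.e., t ∉ resources(σ). Then the Pack-R successor state σ' = ⟨M, G, L, ⟨v,t⟩::S⟩ satisfies resources(σ') = resources(σ) ∪ {t}. -/

import Mathlib

namespace MoveSem

/-- Tags: either the non-resource tag `U` or a resource tag drawn from `RTag`. -/
inductive MTag (RTag : Type) : Type where
  | U : MTag RTag
  | res : RTag → MTag RTag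

/-- Values: primitive values, or record values.  A record value is a non-empty finite
partial function from field names to tagged values, represented as an association
list (non-emptiness and distinctness of field names are imposed in the
well-formedness predicates below). -/
inductive Val (Prim Fld RTag : Type) : Type where
  | prim : Prim → Val Prim Fld RTag
  | record : List (Fld × (Val Prim Fld RTag × MTag RTag)) → Val Prim Fld RTag

/-- Tagged values: a value paired with a tag. -/
abbrev TVal (Prim Fld RTag : Type) : Type := Val Prim Fld RTag × MTag RTag

variable {Loc Prim Var Fld RTag Ty : Type}

/-- Lookup in an association list (the partial-function reading of a record). -/
def lookupF {α : Type} [DecidableEq Fld] : List (Fld × α) → Fld → Option α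
  | [], _ => none
  | (g, a) :: rest, f => if g = f then some a else lookupF rest f

/-- The subterm `tv[p]` of a tagged value located at path `p`. -/
def subTV [DecidableEq Fld] : TVal Prim Fld RTag → List Fld → Option (TVal Prim Fld RTag)
  | tv, [] => some tv
  | (Val.record flds, _), f :: p =>
    match lookupF flds f with
    | some tv' => subTV tv' p
    | none => none
  | (Val.prim _, _), _ :: _ => none

/-- The replacement `tv[p := tv']` of the subterm at path `p` by `tv'`. -/
def setSubTV [DecidableEq Fld] : TVal Prim Fld RTag → List Fld → TVal Prim Fld RTag →
    Option (TVal Prim Fld RTag)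
  | _, [], tv' => some tv'
  | (Val.record flds, t), f :: p, tv' =>
    match lookupF flds f with
    | some tvf =>
      match setSubTV tvf p tv' with
      | some tvf' =>
        some (Val.record (flds.map fun ft => if ft.1 = f then (ft.1, tvf') else ft), t)
      | none => none
    | none => none
  | (Val.prim _, _), _ :: _, _ => none

/-- A tagged value is a *resource* when the type of its value is a resource type. -/
def IsRes (typeOf : Val Prim Fld RTag → Ty) (ResTy : Set Ty) (tv : TVal Prim Fld RTag) : Prop :=
  typeOf tv.1 ∈ ResTy

/-- Well-formed tagged values: the tag is a resource tag iff the type is a resource type,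
and either the value is primitive, or it is a (non-empty, duplicate-free) record value all
of whose field values are well-formed and, in case the type is not a resource type, none of
whose field values is a resource. -/
inductive WFTV (typeOf : Val Prim Fld RTag → Ty) (ResTy : Set Ty) :
    TVal Prim Fld RTag → Prop where
  | prim (p : Prim) (t : MTag RTag)
      (hiff : typeOf (Val.prim p) ∈ ResTy ↔ t ≠ MTag.U) :
      WFTV typeOf ResTy (Val.prim p, t)
  | record (flds : List (Fld × TVal Prim Fld RTag)) (t : MTag RTag)
      (hne : flds ≠ [])
      (hnodup : (flds.map Prod.fst).Nodup)
      (hwf : ∀ f tv, (f, tv) ∈ flds → WFTV typeOf ResTy tv)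
      (hiff : typeOf (Val.record flds) ∈ ResTy ↔ t ≠ MTag.U)
      (hnores : typeOf (Val.record flds) ∉ ResTy →
        ∀ f tv, (f, tv) ∈ flds → ¬ IsRes typeOf ResTy tv) :
      WFTV typeOf ResTy (Val.record flds, t)

/-- References: a location, a path, and a mutability qualifier (`true` = mut). -/
structure MRef (Loc Fld : Type) : Type where
  loc : Loc
  path : List Fld
  mutq : Bool

/-- Stack values: tagged values, references, or (for `Branch`) locations. -/
abbrev SVal (Loc Prim Fld RTag : Type) : Type :=
  TVal Prim Fld RTag ⊕ (MRef Loc Fld ⊕ Loc)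

def SV.tv (tv : TVal Prim Fld RTag) : SVal Loc Prim Fld RTag := Sum.inl tv
def SV.ref (r : MRef Loc Fld) : SVal Loc Prim Fld RTag := Sum.inr (Sum.inl r)
def SV.loc (c : Loc) : SVal Loc Prim Fld RTag := Sum.inr (Sum.inr c)

/-- States: a memory, a global store, a local map, and an operand stack. -/
structure MState (Loc Prim Var Fld RTag Ty : Type) : Type where
  M : Loc → Option (TVal Prim Fld RTag)
  G : Prim × Ty → Option Loc
  L : Var → Option (Loc ⊕ MRef Loc Fld)
  S : List (SVal Loc Prim Fld RTag)

/-- Update (or delete, with `b = none`) a binding of a partial map. -/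
def upd {α β : Type} [DecidableEq α] (f : α → Option β) (a : α) (b : Option β) :
    α → Option β :=
  fun x => if x = a then b else f x

/-- Globally consistent states. -/
structure GloballyConsistent (typeOf : Val Prim Fld RTag → Ty) (ResTy : Set Ty)
    (σ : MState Loc Prim Var Fld RTag Ty) : Prop where
  wf_mem : ∀ c tv, σ.M c = some tv → WFTV typeOf ResTy tv
  wf_stack : ∀ tv, SV.tv tv ∈ σ.S → WFTV typeOf ResTy tv
  dom_eq : ∀ c, (∃ tv, σ.M c = some tv) ↔
    ((∃ g, σ.G g = some c) ∨ (∃ x, σ.L x = some (Sum.inl c)))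
  glob_ty : ∀ a s c, σ.G (a, s) = some c → ∃ v t, σ.M c = some (v, t) ∧ typeOf v = s

/-- Tag-consistent states: each resource tag occurs at most once among subterms of
memory values and stack entries. -/
structure TagConsistent [DecidableEq Fld] (σ : MState Loc Prim Var Fld RTag Ty) : Prop where
  mem_mem : ∀ c₁ c₂ tv₁ tv₂ p₁ p₂ v₁ v₂ t, σ.M c₁ = some tv₁ → σ.M c₂ = some tv₂ →
    subTV tv₁ p₁ = some (v₁, MTag.res t) → subTV tv₂ p₂ = some (v₂, MTag.res t) →
    c₁ = c₂ ∧ p₁ = p₂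
  stack_stack : ∀ (i₁ i₂ : ℕ) tv₁ tv₂ p₁ p₂ v₁ v₂ t,
    σ.S[i₁]? = some (SV.tv tv₁) → σ.S[i₂]? = some (SV.tv tv₂) →
    subTV tv₁ p₁ = some (v₁, MTag.res t) → subTV tv₂ p₂ = some (v₂, MTag.res t) →
    i₁ = i₂ ∧ p₁ = p₂
  mem_stack : ∀ c tv (i : ℕ) tv' p₁ p₂ v₁ v₂ t, σ.M c = some tv → σ.S[i]? = some (SV.tv tv') →
    subTV tv p₁ = some (v₁, MTag.res t) → subTV tv' p₂ = some (v₂, MTag.res t) → False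

/-- Non-aliasing states. -/
structure NonAliasing (σ : MState Loc Prim Var Fld RTag Ty) : Prop where
  locals : ∀ x₁ x₂ c, x₁ ≠ x₂ → σ.L x₁ = some (Sum.inl c) → σ.L x₂ = some (Sum.inl c) → False
  globals : ∀ g₁ g₂ c, g₁ ≠ g₂ → σ.G g₁ = some c → σ.G g₂ = some c → False
  glob_loc : ∀ g x c, σ.G g = some c → σ.L x = some (Sum.inl c) → False

/-- Well-formed states. -/
structure WFState [DecidableEq Fld] (typeOf : Val Prim Fld RTag → Ty) (ResTy : Set Ty)
    (σ : MState Loc Prim Var Fld RTag Ty) : Prop where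
  gc : GloballyConsistent typeOf ResTy σ
  tc : TagConsistent σ
  na : NonAliasing σ

/-- The resource tags of a state: tags occurring on some subterm of a value in the
image of the memory or of a tagged value on the stack. -/
def resources [DecidableEq Fld] (σ : MState Loc Prim Var Fld RTag Ty) : Set RTag :=
  { t | (∃ c tv p v, σ.M c = some tv ∧ subTV tv p = some (v, MTag.res t)) ∨
        (∃ tv, SV.tv tv ∈ σ.S ∧ ∃ p v, subTV tv p = some (v, MTag.res t)) }

theorem lookupF_mem {α : Type} [DecidableEq Fld] {l : List (Fld × α)} {f : Fld} {a : α}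
    (h : lookupF l f = some a) : (f, a) ∈ l := by
  induction l with
  | nil => simp [lookupF] at h
  | cons hd tl ih =>
    obtain ⟨g, b⟩ := hd
    simp only [lookupF] at h
    split at h
    · rename_i hg; cases h; subst hg; exact List.mem_cons_self
    · exact List.mem_cons_of_mem _ (ih h)

theorem mem_lookupF {α : Type} [DecidableEq Fld] {l : List (Fld × α)} {f : Fld} {a : α}
    (hnd : (l.map Prod.fst).Nodup) (h : (f, a) ∈ l) : lookupF l f = some a := by
  induction l with
  | nil => simp at h
  | cons hd tl ih =>
    obtain ⟨g, b⟩ := hd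
    simp only [List.map_cons, List.nodup_cons] at hnd
    rcases List.mem_cons.mp h with heq | hmem
    · cases heq; simp [lookupF]
    · simp only [lookupF]
      split
      · rename_i hg
        exact absurd (List.mem_map.mpr ⟨(f, a), hmem, hg.symm⟩) hnd.1
      · exact ih hnd.2 hmem

/-- Resources introduced by `Pack-R`: packing a record of resource type with a fresh
tag `t` adds exactly `t` to the resources of the state. -/
theorem pack_r_resources {Loc Prim Var Fld RTag Ty : Type}
    [DecidableEq Loc] [DecidableEq Prim] [DecidableEq Var] [DecidableEq Fld] [DecidableEq Ty]
    [Countable Loc] [Countable Prim] [Countable Var] [Countable RTag] [Finite Fld]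
    (typeOf : Val Prim Fld RTag → Ty) (ResTy : Set Ty)
    (M : Loc → Option (TVal Prim Fld RTag)) (G : Prim × Ty → Option Loc)
    (L : Var → Option (Loc ⊕ MRef Loc Fld)) (S : List (SVal Loc Prim Fld RTag))
    (s : Ty) (flds : List (Fld × TVal Prim Fld RTag)) (t : RTag)
    (hwf : WFState typeOf ResTy (MState.mk M G L ((flds.map fun ft => SV.tv ft.2) ++ S)))
    (hs : s ∈ ResTy) (hty : typeOf (Val.record flds) = s)
    (hne : flds ≠ []) (hnodup : (flds.map Prod.fst).Nodup)
    -- t is fresh: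
    (hfresh : t ∉ resources (MState.mk M G L ((flds.map fun ft => SV.tv ft.2) ++ S))) :
    resources (MState.mk M G L (SV.tv (Val.record flds, MTag.res t) :: S)) =
      resources (MState.mk M G L ((flds.map fun ft => SV.tv ft.2) ++ S)) ∪ {t} := by
  ext t'
  simp only [resources, Set.mem_setOf_eq, Set.mem_union, Set.mem_singleton_iff]
  constructor
  · rintro (⟨c, tv, p, v, hM, hsub⟩ | ⟨tv, htv, p, v, hsub⟩)
    · exact Or.inl (Or.inl ⟨c, tv, p, v, hM, hsub⟩)
    · rcases List.mem_cons.mp htv with heq | hmem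
      · have htv0 : tv = (Val.record flds, MTag.res t) := by
          simpa [SV.tv] using heq
        subst htv0
        cases p with
        | nil =>
          right
          simp only [subTV, Option.some.injEq, Prod.mk.injEq, MTag.res.injEq] at hsub
          exact hsub.2.symm
        | cons f p' =>
          left; right
          simp only [subTV] at hsub
          cases hl : lookupF flds f with
          | none => rw [hl] at hsub; exact absurd hsub (by simp)
          | some tv' =>
            rw [hl] at hsub
            exact ⟨tv', List.mem_append_left _
              (List.mem_map.mpr ⟨(f, tv'), lookupF_mem hl, rfl⟩), p', v, hsub⟩
      · exact Or.inl (Or.inr ⟨tv, List.mem_append_right _ hmem, p, v, hsub⟩)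
  · rintro ((⟨c, tv, p, v, hM, hsub⟩ | ⟨tv, htv, p, v, hsub⟩) | rfl)
    · exact Or.inl ⟨c, tv, p, v, hM, hsub⟩
    · rcases List.mem_append.mp htv with hmem | hmem
      · rcases List.mem_map.mp hmem with ⟨ft, hft, heq⟩
        have htveq : tv = ft.2 := by simpa [SV.tv] using heq.symm
        subst htveq
        refine Or.inr ⟨(Val.record flds, MTag.res t), List.mem_cons_self,
          ft.1 :: p, v, ?_⟩
        simp only [subTV]
        rw [mem_lookupF hnodup (show (ft.1, ft.2) ∈ flds from by simpa using hft)]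
        exact hsub
      · exact Or.inr ⟨tv, List.mem_cons_of_mem _ hmem, p, v, hsub⟩
    · exact Or.inr ⟨(Val.record flds, MTag.res t'), List.mem_cons_self,
        [], Val.record flds, rfl⟩

end MoveSem
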